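/- Let Ω ⊂ ℝ² be a bounded open set, T > 0, and 1 < p < ∞ with p' = p/(p−1). Let f : ℝ² × ℝ → ℝ² be C^∞, and for i = 1,2 let u^i : ℝ² × ℝ → ℝ² and π^i : ℝ² × ℝ → ℝ be C^∞ functions such that ∂_t u^i + (u^i·∇)u^i + ∇π^i = f on Ω × (0,T), and for every t ∈ (0,T), ∫_Ω u^i(x,t)·∇φ(x) dx = 0 for every smooth function φ : ℝ² → ℝ. Set u = u² − u¹ and Y(t) = ∫_Ω |u(x,t)|² dx. Then for every t ∈ (0,T): Y'(t) ≤ 2 ‖∇u¹(·,t)‖_{L^p(Ω)} · ‖u(·,t)‖_{L^{2p'}(Ω)}², where ‖∇u¹(·,t)‖_{L^p(Ω)} is the L^p norm over Ω of the Frobenius norm of the spatial Jacobian matrix of u¹(·,t). -/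

import Mathlib

open Set MeasureTheory
open scoped RealInnerProductSpace

section Aux

abbrev E2 := EuclideanSpace ℝ (Fin 2)

lemma euc_decomp (v : E2) : ∑ i, v i • EuclideanSpace.single i (1:ℝ) = v := by
  ext j
  fin_cases j <;> simp [EuclideanSpace.single_apply, Fin.sum_univ_two]

lemma clm_decomp (ℓ : E2 →L[ℝ] ℝ) (v : E2) : ℓ v = ∑ i, v i * ℓ (EuclideanSpace.single i 1) := by
  conv_lhs => rw [← euc_decomp v]
  simp [map_sum]

lemma slice_fderiv {F : Type*} [NormedAddCommGroup F] [NormedSpace ℝ F]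
    (g : E2 × ℝ → F) (hg : ContDiff ℝ (⊤ : ℕ∞) g) (x : E2) (t : ℝ) (w : E2) :
    fderiv ℝ (fun y => g (y, t)) x w = fderiv ℝ g (x, t) (w, 0) := by
  have h1 : HasFDerivAt (fun y : E2 => (y, t)) ((ContinuousLinearMap.id ℝ E2).prod 0) x :=
    (hasFDerivAt_id x).prodMk (hasFDerivAt_const t x)
  have h2 : HasFDerivAt g (fderiv ℝ g (x, t)) (x, t) :=
    (hg.differentiable (by simp) (x,t)).hasFDerivAt
  have h3 : HasFDerivAt (fun y => g (y, t))
      ((fderiv ℝ g (x, t)).comp ((ContinuousLinearMap.id ℝ E2).prod 0)) x := h2.comp x h1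
  rw [h3.fderiv]; rfl

lemma slice_deriv {F : Type*} [NormedAddCommGroup F] [NormedSpace ℝ F]
    (g : E2 × ℝ → F) (hg : ContDiff ℝ (⊤ : ℕ∞) g) (x : E2) (t : ℝ) :
    HasDerivAt (fun s => g (x, s)) (fderiv ℝ g (x, t) (0, 1)) t := by
  have h1 : HasDerivAt (fun s : ℝ => (x, s)) ((0 : E2), (1:ℝ)) t :=
    (hasDerivAt_const t x).prodMk (hasDerivAt_id t)
  have h2 : HasFDerivAt g (fderiv ℝ g (x, t)) (x, t) :=
    (hg.differentiable (by simp) (x,t)).hasFDerivAt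
  exact h2.comp_hasDerivAt t h1

lemma coord_fderiv {g : E2 × ℝ → E2} (hg : ContDiff ℝ (⊤ : ℕ∞) g) (q : E2 × ℝ) (v : E2 × ℝ) (j : Fin 2) :
    fderiv ℝ (fun q => g q j) q v = fderiv ℝ g q v j := by
  have h := ((EuclideanSpace.proj j).hasFDerivAt.comp q
    (hg.differentiable (by simp) q).hasFDerivAt).fderiv
  have he : (fun q => g q j) = (EuclideanSpace.proj (𝕜 := ℝ) j) ∘ g := rfl
  rw [he, h]; rfl

lemma int_on {F : Type*} [NormedAddCommGroup F] {f : E2 → F} (hf : Continuous f)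
    {Ω : Set E2} (hΩ : Bornology.IsBounded Ω) : IntegrableOn f Ω := by
  have hc : IsCompact (closure Ω) := hΩ.isCompact_closure
  exact (hf.continuousOn.integrableOn_compact hc).mono_set subset_closure

lemma meas_fin {Ω : Set E2} (hΩ : Bornology.IsBounded Ω) :
    IsFiniteMeasure (volume.restrict Ω) := by
  constructor
  rw [Measure.restrict_apply_univ]
  exact hΩ.measure_lt_top

lemma memLp_of_cont {f : E2 → ℝ} (hf : Continuous f) {Ω : Set E2} (hm : MeasurableSet Ω)
    (hΩ : Bornology.IsBounded Ω) (q : ℝ) :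
    MemLp f (ENNReal.ofReal q) (volume.restrict Ω) := by
  haveI := meas_fin hΩ
  obtain ⟨C, hC⟩ := (hΩ.isCompact_closure).exists_bound_of_continuousOn hf.continuousOn
  have h : MemLp f ⊤ (volume.restrict Ω) := by
    refine memLp_top_of_bound hf.aestronglyMeasurable C ?_
    filter_upwards [ae_restrict_mem hm] with x hx
    exact hC x (subset_closure hx)
  exact h.mono_exponent le_top

lemma grad_inner (φ : E2 → ℝ) (x v : E2) : ⟪v, gradient φ x⟫ = fderiv ℝ φ x v := by
  rw [real_inner_comm, gradient, InnerProductSpace.toDual_symm_apply]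

lemma euc_inner (a b : E2) : ⟪a, b⟫ = ∑ i, a i * b i := by
  simp [PiLp.inner_apply, RCLike.inner_apply]; ring

lemma euc_norm_sq (v : E2) : ‖v‖^2 = ∑ i, (v i)^2 := by
  rw [EuclideanSpace.norm_eq, Real.sq_sqrt (by positivity)]
  congr 1; funext i; rw [Real.norm_eq_abs, sq_abs]

lemma cs2 (a : Fin 2 → ℝ) (A : Fin 2 → Fin 2 → ℝ) :
    -(∑ i, ∑ j, a i * a j * A i j) ≤ Real.sqrt (∑ i, ∑ j, (A i j)^2) * (∑ i, (a i)^2) := by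
  set S := ∑ i, ∑ j, a i * a j * A i j with hS
  have h1 : S^2 ≤ (∑ p : Fin 2 × Fin 2, (a p.1 * a p.2)^2) * ∑ p : Fin 2 × Fin 2, (A p.1 p.2)^2 := by
    have := Finset.sum_mul_sq_le_sq_mul_sq Finset.univ (fun p : Fin 2 × Fin 2 => a p.1 * a p.2)
      (fun p => A p.1 p.2)
    simpa [Fintype.sum_prod_type, hS] using this
  have e2 : ∑ p : Fin 2 × Fin 2, (a p.1 * a p.2)^2 = (∑ i, (a i)^2)^2 := by
    rw [Fintype.sum_prod_type]
    rw [sq (∑ i, (a i)^2), Finset.sum_mul_sum]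
    exact Finset.sum_congr rfl fun i _ => Finset.sum_congr rfl fun j _ => by ring
  have e3 : ∑ p : Fin 2 × Fin 2, (A p.1 p.2)^2 = ∑ i, ∑ j, (A i j)^2 := Fintype.sum_prod_type _
  rw [e2, e3] at h1
  have hann : 0 ≤ ∑ i, (a i)^2 := by positivity
  have hs : |S| ≤ Real.sqrt (∑ i, ∑ j, (A i j)^2) * (∑ i, (a i)^2) := by
    have h3 : |S| = Real.sqrt (S^2) := (Real.sqrt_sq_eq_abs S).symm
    rw [h3]
    calc Real.sqrt (S^2) ≤ Real.sqrt ((∑ i, (a i)^2)^2 * ∑ i, ∑ j, (A i j)^2) :=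
          Real.sqrt_le_sqrt h1
      _ = Real.sqrt (∑ i, ∑ j, (A i j)^2) * (∑ i, (a i)^2) := by
          rw [Real.sqrt_mul (by positivity), Real.sqrt_sq hann]; ring
  calc -S ≤ |S| := neg_le_abs S
    _ ≤ _ := hs

end Aux

/-- Yudovich energy differential inequality. If `u¹, u²` are two smooth
Euler solutions on `Ω × (0,T)` with the same forcing `f` and tangential divergence-free
velocities, then `Y(t) = ∫_Ω |u² − u¹|²` satisfies, for `t ∈ (0,T)`,
`Y'(t) ≤ 2 ‖∇u¹(·,t)‖_{L^p(Ω)} ‖(u²−u¹)(·,t)‖_{L^{2p'}(Ω)}²`, with `p' = p/(p−1)` and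
`‖∇u¹(·,t)‖_{L^p}` the `L^p` norm of the Frobenius norm of the spatial Jacobian of `u¹`. -/
theorem stmt6 (Ω : Set (EuclideanSpace ℝ (Fin 2)))
    (hΩopen : IsOpen Ω) (hΩbdd : Bornology.IsBounded Ω)
    (T p : ℝ) (hT : 0 < T) (hp : 1 < p)
    (f u₁ u₂ : EuclideanSpace ℝ (Fin 2) × ℝ → EuclideanSpace ℝ (Fin 2))
    (π₁ π₂ : EuclideanSpace ℝ (Fin 2) × ℝ → ℝ)
    (hf : ContDiff ℝ (⊤ : ℕ∞) f) (hu₁ : ContDiff ℝ (⊤ : ℕ∞) u₁) (hu₂ : ContDiff ℝ (⊤ : ℕ∞) u₂)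
    (hπ₁ : ContDiff ℝ (⊤ : ℕ∞) π₁) (hπ₂ : ContDiff ℝ (⊤ : ℕ∞) π₂)
    (heq₁ : ∀ x ∈ Ω, ∀ t ∈ Set.Ioo (0:ℝ) T, ∀ j : Fin 2,
      fderiv ℝ (fun q => u₁ q j) (x, t) (0, 1)
        + (∑ i : Fin 2, u₁ (x, t) i * fderiv ℝ (fun q => u₁ q j) (x, t) (EuclideanSpace.single i 1, 0))
        + fderiv ℝ π₁ (x, t) (EuclideanSpace.single j 1, 0)
        = f (x, t) j)
    (heq₂ : ∀ x ∈ Ω, ∀ t ∈ Set.Ioo (0:ℝ) T, ∀ j : Fin 2,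
      fderiv ℝ (fun q => u₂ q j) (x, t) (0, 1)
        + (∑ i : Fin 2, u₂ (x, t) i * fderiv ℝ (fun q => u₂ q j) (x, t) (EuclideanSpace.single i 1, 0))
        + fderiv ℝ π₂ (x, t) (EuclideanSpace.single j 1, 0)
        = f (x, t) j)
    (htang₁ : ∀ t ∈ Set.Ioo (0:ℝ) T, ∀ φ : EuclideanSpace ℝ (Fin 2) → ℝ, ContDiff ℝ (⊤ : ℕ∞) φ →
      ∫ x in Ω, ⟪u₁ (x, t), gradient φ x⟫ = 0)
    (htang₂ : ∀ t ∈ Set.Ioo (0:ℝ) T, ∀ φ : EuclideanSpace ℝ (Fin 2) → ℝ, ContDiff ℝ (⊤ : ℕ∞) φ →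
      ∫ x in Ω, ⟪u₂ (x, t), gradient φ x⟫ = 0) :
    ∀ t ∈ Set.Ioo (0:ℝ) T, ∃ Y' : ℝ,
      HasDerivAt (fun s => ∫ x in Ω, ‖u₂ (x, s) - u₁ (x, s)‖ ^ 2) Y' t ∧
      Y' ≤ 2 * (∫ x in Ω, (Real.sqrt (∑ i : Fin 2, ∑ j : Fin 2,
                (fderiv ℝ (fun q => u₁ q j) (x, t) (EuclideanSpace.single i 1, 0)) ^ 2)) ^ p) ^ (1/p)
             * ((∫ x in Ω, ‖u₂ (x, t) - u₁ (x, t)‖ ^ (2 * (p/(p-1)))) ^ (1/(2 * (p/(p-1))))) ^ 2 := by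
  intro t ht
  haveI : IsFiniteMeasure (volume.restrict Ω) := meas_fin hΩbdd
  have hΩm : MeasurableSet Ω := hΩopen.measurableSet
  set uu : E2 × ℝ → E2 := fun q => u₂ q - u₁ q with huu_def
  have huu : ContDiff ℝ (⊤ : ℕ∞) uu := hu₂.sub hu₁
  have huuj : ∀ j : Fin 2, ContDiff ℝ (⊤ : ℕ∞) (fun q => uu q j) :=
    fun j => (EuclideanSpace.proj (𝕜 := ℝ) j).contDiff.comp huu
  have hu₁j : ∀ j : Fin 2, ContDiff ℝ (⊤ : ℕ∞) (fun q => u₁ q j) :=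
    fun j => (EuclideanSpace.proj (𝕜 := ℝ) j).contDiff.comp hu₁
  have hu₂j : ∀ j : Fin 2, ContDiff ℝ (⊤ : ℕ∞) (fun q => u₂ q j) :=
    fun j => (EuclideanSpace.proj (𝕜 := ℝ) j).contDiff.comp hu₂
  set g0 : E2 × ℝ → ℝ := fun q => 2 * ⟪uu q, fderiv ℝ uu q (0, 1)⟫ with hg0_def
  have hg0c : Continuous g0 := by
    have h1 : Continuous fun q => fderiv ℝ uu q (0, 1) :=
      (huu.continuous_fderiv (by simp)).clm_apply continuous_const
    exact continuous_const.mul (huu.continuous.inner h1)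
  -- slice continuity
  have hslice : ∀ s : ℝ, Continuous fun x : E2 => uu (x, s) :=
    fun s => huu.continuous.comp (continuous_id.prodMk continuous_const)
  -- STEP A: differentiation under the integral sign
  have stepA : Integrable (fun x => g0 (x, t)) (volume.restrict Ω) ∧
      HasDerivAt (fun s => ∫ x in Ω, ‖u₂ (x, s) - u₁ (x, s)‖ ^ 2)
        (∫ x in Ω, g0 (x, t)) t := by
    obtain ⟨C, hC⟩ := (hΩbdd.isCompact_closure.prod (isCompact_Icc (a := t - 1) (b := t + 1))).exists_bound_of_continuousOn hg0c.continuousOn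
    refine hasDerivAt_integral_of_dominated_loc_of_deriv_le (s := Metric.ball t 1) (Metric.ball_mem_nhds t one_pos)
      (F := fun s x => ‖u₂ (x, s) - u₁ (x, s)‖ ^ 2) (F' := fun s x => g0 (x, s))
      (bound := fun _ => C) ?_ ?_ ?_ ?_ ?_ ?_
    · exact Filter.Eventually.of_forall fun s =>
        (((hslice s).norm.pow 2)).aestronglyMeasurable
    · exact int_on ((hslice t).norm.pow 2) hΩbdd
    · exact (hg0c.comp (continuous_id.prodMk continuous_const)).aestronglyMeasurable
    · filter_upwards [ae_restrict_mem hΩm] with x hx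
      intro s hs
      refine hC (x, s) ⟨subset_closure hx, ?_⟩
      rw [Real.ball_eq_Ioo] at hs
      exact Ioo_subset_Icc_self hs
    · exact integrable_const C
    · refine Filter.Eventually.of_forall fun x => fun s _ => ?_
      have hv : HasDerivAt (fun s' => uu (x, s')) (fderiv ℝ uu (x, s) (0, 1)) s :=
        slice_deriv uu huu x s
      have h2 := hv.inner ℝ hv
      have he : (fun s' => ‖u₂ (x, s') - u₁ (x, s')‖ ^ 2) = fun s' => ⟪uu (x, s'), uu (x, s')⟫ := by
        funext s'; rw [real_inner_self_eq_norm_sq]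
      rw [he]
      refine h2.congr_deriv ?_
      rw [hg0_def]
      rw [real_inner_comm (uu (x,s)) (fderiv ℝ uu (x, s) (0, 1))]
      ring
  refine ⟨∫ x in Ω, g0 (x, t), stepA.2, ?_⟩
  -- notation for fixed-time objects
  set w : E2 → E2 := fun x => uu (x, t) with hw_def
  have hwc : Continuous w := hslice t
  set Du₁ : E2 → Fin 2 → Fin 2 → ℝ :=
    fun x i j => fderiv ℝ (fun q => u₁ q j) (x, t) (EuclideanSpace.single i 1, 0) with hDu₁_def
  set Duu : E2 → Fin 2 → Fin 2 → ℝ :=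
    fun x i j => fderiv ℝ (fun q => uu q j) (x, t) (EuclideanSpace.single i 1, 0) with hDuu_def
  set R : E2 → ℝ := fun x => ∑ i, ∑ j, w x i * w x j * Du₁ x i j with hR_def
  set K : E2 → ℝ := fun x => ∑ j, w x j * ∑ i, u₂ (x, t) i * Duu x i j with hK_def
  set P : E2 → ℝ := fun x => ∑ j, w x j * (fderiv ℝ π₂ (x, t) (EuclideanSpace.single j 1, 0)
      - fderiv ℝ π₁ (x, t) (EuclideanSpace.single j 1, 0)) with hP_def
  -- continuity facts
  have hcoordc : ∀ (g : E2 × ℝ → ℝ), ContDiff ℝ (⊤ : ℕ∞) g → ∀ v : E2 × ℝ,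
      Continuous (fun x : E2 => fderiv ℝ g (x, t) v) := by
    intro g hg v
    exact ((hg.continuous_fderiv (by simp)).comp
      (continuous_id.prodMk continuous_const)).clm_apply continuous_const
  have hwi : ∀ i : Fin 2, Continuous fun x => w x i :=
    fun i => (EuclideanSpace.proj (𝕜 := ℝ) i).continuous.comp hwc
  have hu₂i : ∀ i : Fin 2, Continuous fun x => u₂ (x, t) i :=
    fun i => (EuclideanSpace.proj (𝕜 := ℝ) i).continuous.comp
      (hu₂.continuous.comp (continuous_id.prodMk continuous_const))
  have hDu₁c : ∀ i j, Continuous fun x => Du₁ x i j := fun i j => hcoordc _ (hu₁j j) _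
  have hDuuc : ∀ i j, Continuous fun x => Duu x i j := fun i j => hcoordc _ (huuj j) _
  have hRc : Continuous R := by
    apply continuous_finset_sum; intro i _
    apply continuous_finset_sum; intro j _
    exact ((hwi i).mul (hwi j)).mul (hDu₁c i j)
  have hKc : Continuous K := by
    apply continuous_finset_sum; intro j _
    exact (hwi j).mul (continuous_finset_sum _ fun i _ => (hu₂i i).mul (hDuuc i j))
  have hPc : Continuous P := by
    apply continuous_finset_sum; intro j _
    exact (hwi j).mul ((hcoordc _ hπ₂ _).sub (hcoordc _ hπ₁ _))
  -- pointwise PDE identity on Ω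
  have hsplit : ∀ x ∈ Ω, g0 (x, t) = -2 * K x - 2 * R x - 2 * P x := by
    intro x hx
    have hsubt : ∀ (v : E2 × ℝ) (j : Fin 2), fderiv ℝ (fun q => uu q j) (x, t) v
        = fderiv ℝ (fun q => u₂ q j) (x, t) v - fderiv ℝ (fun q => u₁ q j) (x, t) v := by
      intro v j
      have he : (fun q => uu q j) = fun q => u₂ q j - u₁ q j := rfl
      rw [he, fderiv_fun_sub ((hu₂j j).differentiable (by simp) _)
        ((hu₁j j).differentiable (by simp) _)]
      rfl
    have h1 := heq₁ x hx t ht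
    have h2 := heq₂ x hx t ht
    have hDtj : ∀ j : Fin 2, fderiv ℝ uu (x, t) (0, 1) j
        = -(∑ i, u₂ (x, t) i * Duu x i j) - (∑ i, w x i * Du₁ x i j)
          - (fderiv ℝ π₂ (x, t) (EuclideanSpace.single j 1, 0)
             - fderiv ℝ π₁ (x, t) (EuclideanSpace.single j 1, 0)) := by
      intro j
      rw [← coord_fderiv huu (x, t) (0, 1) j, hsubt (0, 1) j]
      have hS : (∑ i, u₂ (x, t) i * fderiv ℝ (fun q => u₂ q j) (x, t) (EuclideanSpace.single i 1, 0))
          - ∑ i, u₁ (x, t) i * fderiv ℝ (fun q => u₁ q j) (x, t) (EuclideanSpace.single i 1, 0)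
          = (∑ i, u₂ (x, t) i * Duu x i j) + ∑ i, w x i * Du₁ x i j := by
        rw [← Finset.sum_sub_distrib, ← Finset.sum_add_distrib]
        refine Finset.sum_congr rfl fun i _ => ?_
        have hD : Duu x i j = fderiv ℝ (fun q => u₂ q j) (x, t) (EuclideanSpace.single i 1, 0)
            - fderiv ℝ (fun q => u₁ q j) (x, t) (EuclideanSpace.single i 1, 0) :=
          hsubt (EuclideanSpace.single i 1, 0) j
        have hwv : w x i = u₂ (x, t) i - u₁ (x, t) i := rfl
        rw [hD, hwv]
        simp only [hDu₁_def]
        ring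
      have e1 := h1 j
      have e2 := h2 j
      simp only [hDu₁_def] at hS ⊢
      linarith [hS]
    have hg : g0 (x, t) = 2 * ∑ j, w x j * fderiv ℝ uu (x, t) (0, 1) j := by
      show 2 * ⟪uu (x, t), fderiv ℝ uu (x, t) (0, 1)⟫ = _
      rw [euc_inner]
    rw [hg]
    have hterm : ∀ j : Fin 2, w x j * fderiv ℝ uu (x, t) (0, 1) j
        = -(w x j * ∑ i, u₂ (x, t) i * Duu x i j) - w x j * (∑ i, w x i * Du₁ x i j)
          - w x j * (fderiv ℝ π₂ (x, t) (EuclideanSpace.single j 1, 0)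
             - fderiv ℝ π₁ (x, t) (EuclideanSpace.single j 1, 0)) := by
      intro j; rw [hDtj j]; ring
    rw [Finset.sum_congr rfl (fun j _ => hterm j)]
    have hswap : ∑ j, w x j * (∑ i, w x i * Du₁ x i j) = R x := by
      simp only [hR_def]
      rw [Finset.sum_comm]
      refine Finset.sum_congr rfl fun j _ => ?_
      rw [Finset.mul_sum]
      exact Finset.sum_congr rfl fun i _ => by ring
    rw [Finset.sum_sub_distrib, Finset.sum_sub_distrib, Finset.sum_neg_distrib, hswap]
    simp only [hK_def, hP_def]
    ring
  -- integral identities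
  have hKint : ∫ x in Ω, K x = 0 := by
    set φ : E2 → ℝ := fun y => ∑ j, uu (y, t) j * uu (y, t) j with hφ_def
    have hsl : ∀ j : Fin 2, ContDiff ℝ (⊤ : ℕ∞) (fun y : E2 => uu (y, t) j) :=
      fun j => (huuj j).comp (contDiff_id.prodMk contDiff_const)
    have hφ : ContDiff ℝ (⊤ : ℕ∞) φ := ContDiff.sum fun j _ => (hsl j).mul (hsl j)
    have hpt : ∀ x : E2, ⟪u₂ (x, t), gradient φ x⟫ = 2 * K x := by
      intro x
      rw [grad_inner]
      have hgj : ∀ j : Fin 2, HasFDerivAt (fun y : E2 => uu (y, t) j)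
          (fderiv ℝ (fun y : E2 => uu (y, t) j) x) x :=
        fun j => ((hsl j).differentiable (by simp) x).hasFDerivAt
      have hφd : HasFDerivAt φ (∑ j, (uu (x, t) j • fderiv ℝ (fun y : E2 => uu (y, t) j) x
          + uu (x, t) j • fderiv ℝ (fun y : E2 => uu (y, t) j) x)) x :=
        HasFDerivAt.fun_sum fun j _ => (hgj j).mul (hgj j)
      rw [hφd.fderiv, ContinuousLinearMap.sum_apply]
      have hterm : ∀ j : Fin 2, (uu (x, t) j • fderiv ℝ (fun y : E2 => uu (y, t) j) x
          + uu (x, t) j • fderiv ℝ (fun y : E2 => uu (y, t) j) x) (u₂ (x, t))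
          = 2 * (w x j * ∑ i, u₂ (x, t) i * Duu x i j) := by
        intro j
        have hD : fderiv ℝ (fun y : E2 => uu (y, t) j) x (u₂ (x, t))
            = ∑ i, u₂ (x, t) i * Duu x i j := by
          rw [clm_decomp]
          refine Finset.sum_congr rfl fun i _ => ?_
          rw [slice_fderiv (fun q => uu q j) (huuj j) x t (EuclideanSpace.single i 1)]
        rw [ContinuousLinearMap.add_apply]
        simp only [ContinuousLinearMap.coe_smul', Pi.smul_apply, smul_eq_mul]
        rw [hD]
        have : w x j = uu (x, t) j := rfl
        rw [this]; ring
      rw [Finset.sum_congr rfl (fun j _ => hterm j)]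
      simp only [hK_def]
      rw [Finset.mul_sum]
    have h0 := htang₂ t ht φ hφ
    have h2 : ∫ x in Ω, 2 * K x = 0 := by
      rw [← h0]
      exact setIntegral_congr_fun hΩm (fun x _ => (hpt x).symm)
    rw [integral_const_mul] at h2
    linarith
  have hPint : ∫ x in Ω, P x = 0 := by
    set ψ : E2 → ℝ := fun y => π₂ (y, t) - π₁ (y, t) with hψ_def
    have hψ : ContDiff ℝ (⊤ : ℕ∞) ψ := (hπ₂.comp (contDiff_id.prodMk contDiff_const)).sub
      (hπ₁.comp (contDiff_id.prodMk contDiff_const))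
    have hDψ : ∀ (x : E2) (j : Fin 2), fderiv ℝ ψ x (EuclideanSpace.single j 1)
        = fderiv ℝ π₂ (x, t) (EuclideanSpace.single j 1, 0)
          - fderiv ℝ π₁ (x, t) (EuclideanSpace.single j 1, 0) := by
      intro x j
      have he : ψ = fun y => (fun y : E2 => π₂ (y, t)) y - (fun y : E2 => π₁ (y, t)) y := rfl
      have hd2 : DifferentiableAt ℝ (fun y : E2 => π₂ (y, t)) x :=
        (hπ₂.comp (contDiff_id.prodMk contDiff_const)).differentiable (by simp) x
      have hd1 : DifferentiableAt ℝ (fun y : E2 => π₁ (y, t)) x :=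
        (hπ₁.comp (contDiff_id.prodMk contDiff_const)).differentiable (by simp) x
      rw [he, fderiv_fun_sub hd2 hd1,
        ContinuousLinearMap.sub_apply,
        slice_fderiv π₂ hπ₂ x t (EuclideanSpace.single j 1),
        slice_fderiv π₁ hπ₁ x t (EuclideanSpace.single j 1)]
    have hpt : ∀ x : E2, P x = ⟪u₂ (x, t), gradient ψ x⟫ - ⟪u₁ (x, t), gradient ψ x⟫ := by
      intro x
      rw [grad_inner, grad_inner, clm_decomp (fderiv ℝ ψ x) (u₂ (x, t)),
        clm_decomp (fderiv ℝ ψ x) (u₁ (x, t)), ← Finset.sum_sub_distrib]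
      simp only [hP_def]
      refine Finset.sum_congr rfl fun j _ => ?_
      rw [hDψ x j]
      have hwj : w x j = u₂ (x, t) j - u₁ (x, t) j := rfl
      rw [hwj]; ring
    have hgradc : Continuous fun x => gradient ψ x := by
      show Continuous fun x => (InnerProductSpace.toDual ℝ E2).symm (fderiv ℝ ψ x)
      exact (InnerProductSpace.toDual ℝ E2).symm.continuous.comp (hψ.continuous_fderiv (by simp))
    have hi2 : IntegrableOn (fun x => ⟪u₂ (x, t), gradient ψ x⟫) Ω :=
      int_on ((hu₂.continuous.comp (continuous_id.prodMk continuous_const)).inner hgradc) hΩbdd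
    have hi1 : IntegrableOn (fun x => ⟪u₁ (x, t), gradient ψ x⟫) Ω :=
      int_on ((hu₁.continuous.comp (continuous_id.prodMk continuous_const)).inner hgradc) hΩbdd
    have hsplitP : ∫ x in Ω, P x
        = (∫ x in Ω, ⟪u₂ (x, t), gradient ψ x⟫) - ∫ x in Ω, ⟪u₁ (x, t), gradient ψ x⟫ := by
      rw [← integral_sub hi2 hi1]
      exact setIntegral_congr_fun hΩm (fun x _ => hpt x)
    rw [hsplitP, htang₂ t ht ψ hψ, htang₁ t ht ψ hψ, sub_zero]
  have hY : ∫ x in Ω, g0 (x, t) = -2 * ∫ x in Ω, R x := by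
    have h1 : ∫ x in Ω, g0 (x, t) = ∫ x in Ω, (-2 * K x - 2 * R x - 2 * P x) :=
      setIntegral_congr_fun hΩm fun x hx => hsplit x hx
    rw [h1]
    have hKi : IntegrableOn K Ω := int_on hKc hΩbdd
    have hRi : IntegrableOn R Ω := int_on hRc hΩbdd
    have hPi : IntegrableOn P Ω := int_on hPc hΩbdd
    have e : (fun x => -2 * K x - 2 * R x - 2 * P x)
        = fun x => (-2) * K x + ((-2) * R x + (-2) * P x) := funext fun x => by ring
    rw [e]
    have hsum1 : ∫ x in Ω, ((-2) * K x + ((-2) * R x + (-2) * P x))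
        = (∫ x in Ω, (-2) * K x) + ∫ x in Ω, ((-2) * R x + (-2) * P x) :=
      integral_add (hKi.const_mul (-2)) ((hRi.const_mul (-2)).add (hPi.const_mul (-2)))
    have hsum2 : ∫ x in Ω, ((-2) * R x + (-2) * P x)
        = (∫ x in Ω, (-2) * R x) + ∫ x in Ω, (-2) * P x :=
      integral_add (hRi.const_mul (-2)) (hPi.const_mul (-2))
    rw [hsum1, hsum2, integral_const_mul, integral_const_mul, integral_const_mul, hKint, hPint]
    ring
  rw [hY]
  -- STEP C: Cauchy-Schwarz + Hölder
  set q : ℝ := p / (p - 1) with hq_def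
  have hpq : p.HolderConjugate q := Real.HolderConjugate.conjExponent hp
  have hq1 : 1 < q := hpq.symm.lt
  have hq0 : 0 < q := lt_trans one_pos hq1
  set Gf : E2 → ℝ := fun x => Real.sqrt (∑ i, ∑ j, (Du₁ x i j) ^ 2) with hGf_def
  set H : E2 → ℝ := fun x => ‖w x‖ ^ 2 with hH_def
  have hGfc : Continuous Gf := by
    apply Real.continuous_sqrt.comp
    apply continuous_finset_sum; intro i _
    apply continuous_finset_sum; intro j _
    exact (hDu₁c i j).pow 2
  have hHc : Continuous H := (hwc.norm.pow 2)
  have hGfnn : ∀ x, 0 ≤ Gf x := fun x => Real.sqrt_nonneg _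
  have hHnn : ∀ x, 0 ≤ H x := fun x => by positivity
  have hpw : ∀ x : E2, -2 * R x ≤ 2 * (Gf x * H x) := by
    intro x
    have hcs := cs2 (fun i => w x i) (fun i j => Du₁ x i j)
    have hHs : H x = ∑ i, (w x i) ^ 2 := euc_norm_sq (w x)
    have hRx : R x = ∑ i, ∑ j, w x i * w x j * Du₁ x i j := rfl
    rw [hRx, hHs]
    nlinarith [hcs]
  have hRi : IntegrableOn R Ω := int_on hRc hΩbdd
  have hGHi : IntegrableOn (fun x => 2 * (Gf x * H x)) Ω :=
    int_on (continuous_const.mul (hGfc.mul hHc)) hΩbdd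
  -- Hölder
  have hHolder : ∫ x in Ω, Gf x * H x
      ≤ (∫ x in Ω, (Gf x) ^ p) ^ (1/p) * (∫ x in Ω, (H x) ^ q) ^ (1/q) :=
    MeasureTheory.integral_mul_le_Lp_mul_Lq_of_nonneg hpq
      (Filter.Eventually.of_forall hGfnn) (Filter.Eventually.of_forall hHnn)
      (memLp_of_cont hGfc hΩm hΩbdd p) (memLp_of_cont hHc hΩm hΩbdd q)
  -- rewrite H^q
  have hHq : ∫ x in Ω, (H x) ^ q = ∫ x in Ω, ‖u₂ (x, t) - u₁ (x, t)‖ ^ (2 * q) := by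
    refine setIntegral_congr_fun hΩm (fun x _ => ?_)
    have : H x = ‖u₂ (x, t) - u₁ (x, t)‖ ^ 2 := rfl
    rw [this, ← Real.rpow_natCast ‖u₂ (x, t) - u₁ (x, t)‖ 2, ← Real.rpow_mul (norm_nonneg _)]
    norm_num
  set X : ℝ := ∫ x in Ω, ‖u₂ (x, t) - u₁ (x, t)‖ ^ (2 * q) with hX_def
  have hXnn : 0 ≤ X := by
    apply setIntegral_nonneg hΩm
    intro x _
    exact Real.rpow_nonneg (norm_nonneg _) _
  have hXpow : (X ^ (1/(2*q))) ^ 2 = X ^ (1/q) := by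
    rw [← Real.rpow_natCast (X ^ (1/(2*q))) 2, ← Real.rpow_mul hXnn]
    congr 1
    field_simp
    norm_num
  have hGfP : ∫ x in Ω, (Real.sqrt (∑ i : Fin 2, ∑ j : Fin 2,
      (fderiv ℝ (fun q => u₁ q j) (x, t) (EuclideanSpace.single i 1, 0)) ^ 2)) ^ p
      = ∫ x in Ω, (Gf x) ^ p := rfl
  have hGfPnn : 0 ≤ (∫ x in Ω, (Gf x) ^ p) ^ (1/p) := by
    apply Real.rpow_nonneg
    apply setIntegral_nonneg hΩm
    intro x _
    exact Real.rpow_nonneg (hGfnn x) _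
  calc -2 * ∫ x in Ω, R x = ∫ x in Ω, (-2) * R x := (integral_const_mul _ _).symm
    _ ≤ ∫ x in Ω, 2 * (Gf x * H x) := integral_mono (hRi.const_mul (-2)) hGHi (fun x => hpw x)
    _ = 2 * ∫ x in Ω, Gf x * H x := integral_const_mul _ _
    _ ≤ 2 * ((∫ x in Ω, (Gf x) ^ p) ^ (1/p) * (∫ x in Ω, (H x) ^ q) ^ (1/q)) := by
        have h2 : (0:ℝ) ≤ 2 := by norm_num
        exact mul_le_mul_of_nonneg_left hHolder h2
    _ = 2 * (∫ x in Ω, (Real.sqrt (∑ i : Fin 2, ∑ j : Fin 2,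
            (fderiv ℝ (fun q => u₁ q j) (x, t) (EuclideanSpace.single i 1, 0)) ^ 2)) ^ p) ^ (1/p)
          * ((∫ x in Ω, ‖u₂ (x, t) - u₁ (x, t)‖ ^ (2 * q)) ^ (1/(2 * q))) ^ 2 := by
        rw [hGfP, hHq, ← hX_def, hXpow]
        ring
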